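/- arXiv:1904.00981 — 4 statements merged into one kernel-verified Lean document; each statement's English description precedes it below -/
import Mathlib

section
/- Fix n, k and ℓ with 0 ≤ ℓ ≤ n, and set B_1 = {1,...,ℓ}, B_2 = {ℓ+1,...,n}. For a k-subset I of [n], define its type as |I ∩ B_1|. If T and T' are two k×t tableaux (each column a k-subset ordered by the block diagonal matching field B_ℓ) that are row-wise equal (every row of T is a permutation of the corresponding row of T'), then for each i ∈ {0,1,...,k}, T and T' have the same number of columns of type i. -/
def IncSeq (k : ℕ) (a : ℕ → ℕ) : Prop := ∀ s t, 1 ≤ s → s < t → t ≤ k → a s < a t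

def InRange (n k : ℕ) (a : ℕ → ℕ) : Prop := ∀ t, 1 ≤ t → t ≤ k → 1 ≤ a t ∧ a t ≤ n

/-- The type of a k-subset (given by its increasing enumeration `a` on indices
1,...,k) with respect to the blocks B₁ = {1,...,ℓ}, B₂ = {ℓ+1,...,n}:
the number of its elements lying in B₁. -/
def typeOf (k ℓ : ℕ) (a : ℕ → ℕ) : ℕ :=
  ((Finset.Icc 1 k).filter (fun t => a t ≤ ℓ)).card

/-- The column of the block diagonal matching field B_ℓ associated to the
k-subset with increasing enumeration `a`: the first two entries are swapped
exactly when the subset has type 1 (and k ≥ 2). `mfCol k ℓ a r` is the entry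
in row r (1-based). -/
def mfCol (k ℓ : ℕ) (a : ℕ → ℕ) : ℕ → ℕ := fun r =>
  if typeOf k ℓ a = 1 ∧ 2 ≤ k then
    (if r = 1 then a 2 else if r = 2 then a 1 else a r)
  else a r

lemma typeOf_le (k ℓ : ℕ) (a : ℕ → ℕ) : typeOf k ℓ a ≤ k := by
  unfold typeOf
  calc ((Finset.Icc 1 k).filter (fun t => a t ≤ ℓ)).card
      ≤ (Finset.Icc 1 k).card := Finset.card_filter_le _ _
    _ = k := by simp

lemma le_typeOf_iff (k ℓ : ℕ) (a : ℕ → ℕ) (ha : IncSeq k a) (r : ℕ)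
    (h1 : 1 ≤ r) (h2 : r ≤ k) : a r ≤ ℓ ↔ r ≤ typeOf k ℓ a := by
  constructor
  · intro h
    have hsub : Finset.Icc 1 r ⊆ (Finset.Icc 1 k).filter (fun t => a t ≤ ℓ) := by
      intro s hs
      simp only [Finset.mem_Icc] at hs
      simp only [Finset.mem_filter, Finset.mem_Icc]
      refine ⟨⟨hs.1, le_trans hs.2 h2⟩, ?_⟩
      rcases eq_or_lt_of_le hs.2 with h' | h'
      · rw [h']; exact h
      · have := ha s r hs.1 h' h2
        omega
    have := Finset.card_le_card hsub
    simpa [typeOf] using this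
  · intro h
    by_contra hc
    push_neg at hc
    have hsub : (Finset.Icc 1 k).filter (fun t => a t ≤ ℓ) ⊆ Finset.Icc 1 (r - 1) := by
      intro s hs
      simp only [Finset.mem_filter, Finset.mem_Icc] at hs
      simp only [Finset.mem_Icc]
      refine ⟨hs.1.1, ?_⟩
      by_contra hsr
      push_neg at hsr
      have hrs : r ≤ s := by omega
      rcases eq_or_lt_of_le hrs with h' | h'
      · rw [← h'] at hs; omega
      · have := ha r s h1 h' hs.1.2
        omega
    have := Finset.card_le_card hsub
    have hcard : (Finset.Icc 1 (r - 1)).card = r - 1 := by simp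
    rw [hcard] at this
    unfold typeOf at h
    omega

/-- The predicate "entry ≤ ℓ" in row `r` of the matching-field column, in terms
of the type of the column. -/
lemma mfCol_le_iff (k ℓ : ℕ) (a : ℕ → ℕ) (ha : IncSeq k a) (hk : 2 ≤ k) (r : ℕ)
    (h1 : 1 ≤ r) (h2 : r ≤ k) :
    (mfCol k ℓ a r ≤ ℓ) ↔
      (if r = 1 then 2 ≤ typeOf k ℓ a else if r = 2 then 1 ≤ typeOf k ℓ a
        else r ≤ typeOf k ℓ a) := by
  have e2 := le_typeOf_iff k ℓ a ha 2 (by omega) hk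
  have e1 := le_typeOf_iff k ℓ a ha 1 (by omega) (by omega)
  have er := le_typeOf_iff k ℓ a ha r h1 h2
  unfold mfCol
  by_cases ht : typeOf k ℓ a = 1
  · rw [if_pos ⟨ht, hk⟩]
    rcases eq_or_ne r 1 with rfl | hne1
    · norm_num
      omega
    · rcases eq_or_ne r 2 with rfl | hne2
      · norm_num
        omega
      · rw [if_neg hne1, if_neg hne2, if_neg hne1, if_neg hne2]
        exact er
  · rw [if_neg (by simp [ht])]
    rcases eq_or_ne r 1 with rfl | hne1
    · norm_num
      omega
    · rcases eq_or_ne r 2 with rfl | hne2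
      · norm_num
        omega
      · rw [if_neg hne1, if_neg hne2]
        exact er

/-- if two tableaux (with columns k-subsets ordered by the block
diagonal matching field B_ℓ) are row-wise equal, then for each i they have the
same number of columns of type i. -/
theorem stmt5 (n k ℓ tt : ℕ) (hk : 2 ≤ k) (hℓ : ℓ ≤ n)
    (A B : ℕ → ℕ → ℕ)
    (hA : ∀ c, 1 ≤ c → c ≤ tt → IncSeq k (A c) ∧ InRange n k (A c))
    (hB : ∀ c, 1 ≤ c → c ≤ tt → IncSeq k (B c) ∧ InRange n k (B c))
    (hrow : ∀ r, 1 ≤ r → r ≤ k →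
      (Finset.Icc 1 tt).val.map (fun c => mfCol k ℓ (A c) r) =
      (Finset.Icc 1 tt).val.map (fun c => mfCol k ℓ (B c) r)) :
    ∀ i, ((Finset.Icc 1 tt).filter (fun c => typeOf k ℓ (A c) = i)).card =
         ((Finset.Icc 1 tt).filter (fun c => typeOf k ℓ (B c) = i)).card := by
  -- count of entries ≤ ℓ in each row agrees
  have hcnt : ∀ r, 1 ≤ r → r ≤ k →
      ((Finset.Icc 1 tt).filter (fun c => mfCol k ℓ (A c) r ≤ ℓ)).card =
      ((Finset.Icc 1 tt).filter (fun c => mfCol k ℓ (B c) r ≤ ℓ)).card := by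
    intro r hr1 hr2
    have h := congrArg (Multiset.countP (fun x => x ≤ ℓ)) (hrow r hr1 hr2)
    rw [Multiset.countP_map, Multiset.countP_map] at h
    simpa [Finset.filter, Finset.card] using h
  -- translate row counts into counts of columns with type ≥ j
  have hrewrite : ∀ (T : ℕ → ℕ → ℕ),
      (∀ c, 1 ≤ c → c ≤ tt → IncSeq k (T c)) → ∀ r, 1 ≤ r → r ≤ k →
      ((Finset.Icc 1 tt).filter (fun c => mfCol k ℓ (T c) r ≤ ℓ)).card =
      ((Finset.Icc 1 tt).filter (fun c =>
        (if r = 1 then 2 else if r = 2 then 1 else r) ≤ typeOf k ℓ (T c))).card := by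
    intro T hT r hr1 hr2
    congr 1
    apply Finset.filter_congr
    intro c hc
    simp only [Finset.mem_Icc] at hc
    have := mfCol_le_iff k ℓ (T c) (hT c hc.1 hc.2) hk r hr1 hr2
    rw [this]
    by_cases h1 : r = 1
    · simp [h1]
    · by_cases h2 : r = 2 <;> simp [h1, h2]
  -- counts of columns with type ≥ j agree for all j
  have hS : ∀ j,
      ((Finset.Icc 1 tt).filter (fun c => j ≤ typeOf k ℓ (A c))).card =
      ((Finset.Icc 1 tt).filter (fun c => j ≤ typeOf k ℓ (B c))).card := by
    intro j
    rcases Nat.eq_zero_or_pos j with hj0 | hjpos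
    · subst hj0; simp
    by_cases hjk : j ≤ k
    · -- choose the row giving count of type ≥ j
      set r : ℕ := if j = 1 then 2 else if j = 2 then 1 else j with hrdef
      have hr1 : 1 ≤ r := by unfold r; split <;> [omega; (split <;> omega)]
      have hr2 : r ≤ k := by unfold r; split <;> [omega; (split <;> omega)]
      have hval : (if r = 1 then 2 else if r = 2 then 1 else r) = j := by
        rcases eq_or_ne j 1 with rfl | hj1
        · simp [hrdef]
        · rcases eq_or_ne j 2 with rfl | hj2
          · simp [hrdef]
          · simp [hrdef, hj1, hj2]
      have h := hcnt r hr1 hr2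
      rw [hrewrite A (fun c hc1 hc2 => (hA c hc1 hc2).1) r hr1 hr2,
          hrewrite B (fun c hc1 hc2 => (hB c hc1 hc2).1) r hr1 hr2, hval] at h
      exact h
    · -- j > k: both filters are empty since typeOf ≤ k
      push_neg at hjk
      have hemptyA : (Finset.Icc 1 tt).filter (fun c => j ≤ typeOf k ℓ (A c)) = ∅ := by
        apply Finset.filter_false_of_mem
        intro c _
        have := typeOf_le k ℓ (A c); omega
      have hemptyB : (Finset.Icc 1 tt).filter (fun c => j ≤ typeOf k ℓ (B c)) = ∅ := by
        apply Finset.filter_false_of_mem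
        intro c _
        have := typeOf_le k ℓ (B c); omega
      rw [hemptyA, hemptyB]
  -- conclude: #{type = i} = #{type ≥ i} - #{type ≥ i+1}
  intro i
  have key : ∀ (T : ℕ → ℕ → ℕ),
      ((Finset.Icc 1 tt).filter (fun c => i ≤ typeOf k ℓ (T c))).card =
      ((Finset.Icc 1 tt).filter (fun c => typeOf k ℓ (T c) = i)).card +
      ((Finset.Icc 1 tt).filter (fun c => i + 1 ≤ typeOf k ℓ (T c))).card := by
    intro T
    rw [← Finset.card_union_of_disjoint]
    · congr 1
      ext c
      simp only [Finset.mem_union, Finset.mem_filter]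
      constructor
      · rintro ⟨hc, h⟩
        by_cases h' : typeOf k ℓ (T c) = i
        · exact Or.inl ⟨hc, h'⟩
        · exact Or.inr ⟨hc, by omega⟩
      · rintro (⟨hc, h⟩ | ⟨hc, h⟩) <;> exact ⟨hc, by omega⟩
    · rw [Finset.disjoint_filter]
      intro c _ h
      omega
  have hA' := key A
  have hB' := key B
  have h1 := hS i
  have h2 := hS (i + 1)
  omega
end

section
/- Fix k, n and ℓ ≥ 1. The number of strictly increasing k-tuples w = (w_1 < ... < w_k) in [n] satisfying: w_1 ∈ {2,...,n-k} \ {ℓ}, and {w_2,...,w_k} ⊆ {ℓ+1,...,n} \ {w_1 + 1}, summed over ℓ ∈ {1,...,n-1}, equals 2·C(n-1, k+1), where C denotes the binomial coefficient. -/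
/-- A strictly increasing k-tuple in [n], in normalized form. -/
def IsKSubset (n k : ℕ) (w : ℕ → ℕ) : Prop :=
  (∀ s t, 1 ≤ s → s < t → t ≤ k → w s < w t) ∧
  (∀ t, 1 ≤ t → t ≤ k → 1 ≤ w t ∧ w t ≤ n) ∧
  (∀ t, t = 0 ∨ k < t → w t = 0)

/-- The conditions of Theorem (Intro:Grassmannian) on (ℓ, w):
w₁ ∈ {2,...,n-k} \ {ℓ} and {w₂,...,w_k} ⊆ {ℓ+1,...,n} \ {w₁+1}. -/
def NonToricCond (n k ℓ : ℕ) (w : ℕ → ℕ) : Prop :=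
  2 ≤ w 1 ∧ w 1 ≤ n - k ∧ w 1 ≠ ℓ ∧
  ∀ t, 2 ≤ t → t ≤ k → (ℓ + 1 ≤ w t ∧ w t ≠ w 1 + 1)

/-- Strictly increasing (k+1)-tuples with values in [2,n]. -/
def QTuple (n k : ℕ) (v : ℕ → ℕ) : Prop :=
  (∀ s t, 1 ≤ s → s < t → t ≤ k + 1 → v s < v t) ∧
  (∀ t, 1 ≤ t → t ≤ k + 1 → 2 ≤ v t ∧ v t ≤ n) ∧
  (∀ t, t = 0 ∨ k + 1 < t → v t = 0)

lemma gap_of_mono {K : ℕ} {v : ℕ → ℕ}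
    (hm : ∀ s t, 1 ≤ s → s < t → t ≤ K → v s < v t) :
    ∀ d s, 1 ≤ s → s + d ≤ K → v s + d ≤ v (s + d) := by
  intro d
  induction d with
  | zero => intro s _ _; simp
  | succ d ih =>
    intro s h1 h2
    have h3 := ih s h1 (by omega)
    have h4 := hm (s + d) (s + d + 1) (by omega) (by omega) (by omega)
    show v s + (d + 1) ≤ v (s + d + 1)
    omega

lemma finite_aux (n K : ℕ) (P : (ℕ → ℕ) → Prop)
    (hP : ∀ w, P w → (∀ t, K < t → w t = 0) ∧ (∀ t, w t ≤ n)) :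
    Finite {w : ℕ → ℕ // P w} := by
  have : Function.Injective
      (fun (w : {w : ℕ → ℕ // P w}) => (fun i : Fin (K + 1) => (⟨w.1 i, by
        have := (hP w.1 w.2).2 i; omega⟩ : Fin (n + 1)))) := by
    rintro ⟨w, hw⟩ ⟨w', hw'⟩ h
    ext t
    show w t = w' t
    by_cases ht : t ≤ K
    · have := congrFun h ⟨t, by omega⟩
      simpa using this
    · rw [(hP w hw).1 t (by omega), (hP w' hw').1 t (by omega)]
  exact Finite.of_injective _ this

lemma finite_A (n k ℓ : ℕ) :
    Finite {w : ℕ → ℕ // IsKSubset n k w ∧ NonToricCond n k ℓ w} := by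
  apply finite_aux n k
  rintro w ⟨⟨h1, h2, h3⟩, -⟩
  refine ⟨fun t ht => h3 t (Or.inr ht), fun t => ?_⟩
  by_cases h : 1 ≤ t ∧ t ≤ k
  · exact (h2 t h.1 h.2).2
  · rw [h3 t (by omega)]; omega

lemma finite_Q (n k : ℕ) : Finite {v : ℕ → ℕ // QTuple n k v} := by
  apply finite_aux n (k + 1)
  rintro v ⟨h1, h2, h3⟩
  refine ⟨fun t ht => h3 t (Or.inr ht), fun t => ?_⟩
  by_cases h : 1 ≤ t ∧ t ≤ k + 1
  · exact (h2 t h.1 h.2).2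
  · rw [h3 t (by omega)]; omega

/-- the (k+1)-subset of Fin (n-1) associated to a Q-tuple -/
def toSet (n k : ℕ) (v : ℕ → ℕ) (hv : QTuple n k v) : Finset (Fin (n - 1)) :=
  (Finset.Icc 1 (k + 1)).image (fun t =>
    if h : 1 ≤ t ∧ t ≤ k + 1 then
      (⟨v t - 2, by have h2 := hv.2.1 t h.1 h.2; omega⟩ : Fin (n - 1))
    else ⟨0, by have h2 := hv.2.1 1 le_rfl (by omega); omega⟩)

lemma toSet_card (n k : ℕ) (v : ℕ → ℕ) (hv : QTuple n k v) :
    (toSet n k v hv).card = k + 1 := by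
  unfold toSet
  rw [Finset.card_image_of_injOn]
  · rw [Nat.card_Icc]; omega
  intro a ha b hb hab
  simp only [Finset.coe_Icc, Set.mem_Icc] at ha hb
  beta_reduce at hab
  rw [dif_pos (show 1 ≤ a ∧ a ≤ k + 1 by omega),
    dif_pos (show 1 ≤ b ∧ b ≤ k + 1 by omega)] at hab
  have hva := hv.2.1 a ha.1 ha.2
  have hvb := hv.2.1 b hb.1 hb.2
  have hveq : v a = v b := by
    have := Fin.val_eq_val _ _ |>.mpr hab
    simp only at this
    omega
  by_contra hne
  rcases Nat.lt_or_ge a b with h | h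
  · have := hv.1 a b ha.1 h hb.2; omega
  · have := hv.1 b a hb.1 (by omega) ha.2; omega

lemma toSet_emb (n k : ℕ) (v : ℕ → ℕ) (hv : QTuple n k v) (i : Fin (k + 1)) :
    ((toSet n k v hv).orderEmbOfFin (toSet_card n k v hv) i : ℕ) = v (i.val + 1) - 2 := by
  have hmem : ∀ j : Fin (k + 1),
      (⟨v (j.val + 1) - 2, by
        have h2 := hv.2.1 (j.val + 1) (by omega) (by omega); omega⟩ : Fin (n - 1))
        ∈ toSet n k v hv := by
    intro j
    unfold toSet
    apply Finset.mem_image.mpr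
    refine ⟨j.val + 1, Finset.mem_Icc.mpr ⟨by omega, by omega⟩, ?_⟩
    rw [dif_pos ⟨by omega, by omega⟩]
  have hmono : StrictMono (fun j : Fin (k + 1) =>
      (⟨v (j.val + 1) - 2, by
        have h2 := hv.2.1 (j.val + 1) (by omega) (by omega); omega⟩ : Fin (n - 1))) := by
    intro a b hab
    have h1 := hv.1 (a.val + 1) (b.val + 1) (by omega)
      (by have := Fin.lt_iff_val_lt_val.mp hab; omega) (by omega)
    have h2 := hv.2.1 (a.val + 1) (by omega) (by omega)
    exact Fin.lt_iff_val_lt_val.mpr (by simp; omega)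
  have := Finset.orderEmbOfFin_unique (toSet_card n k v hv) hmem hmono
  rw [← this]

lemma ofSet_mem_toSet (n k : ℕ) (v : ℕ → ℕ) (hv : QTuple n k v)
    (x : Fin (n - 1)) (hx : x ∈ toSet n k v hv) :
    ∃ t, 1 ≤ t ∧ t ≤ k + 1 ∧ (x : ℕ) = v t - 2 := by
  unfold toSet at hx
  obtain ⟨t, ht, hxt⟩ := Finset.mem_image.mp hx
  rw [Finset.mem_Icc] at ht
  rw [dif_pos (by omega)] at hxt
  exact ⟨t, ht.1, ht.2, by rw [← hxt]⟩

/-- the tuple associated to a (k+1)-subset of Fin (n-1) -/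
def ofSet (n k : ℕ) (s : Finset (Fin (n - 1))) (hs : s.card = k + 1) : ℕ → ℕ :=
  fun t => if h : 1 ≤ t ∧ t ≤ k + 1
    then ((s.orderEmbOfFin hs ⟨t - 1, by omega⟩ : Fin (n - 1)) : ℕ) + 2 else 0

lemma ofSet_Q (n k : ℕ) (s : Finset (Fin (n - 1))) (hs : s.card = k + 1) :
    QTuple n k (ofSet n k s hs) := by
  refine ⟨?_, ?_, ?_⟩
  · intro a b ha hab hbk
    unfold ofSet
    rw [dif_pos ⟨ha, by omega⟩, dif_pos ⟨by omega, hbk⟩]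
    have := (s.orderEmbOfFin hs).strictMono
      (show (⟨a - 1, by omega⟩ : Fin (k + 1)) < ⟨b - 1, by omega⟩ by
        rw [Fin.mk_lt_mk]; omega)
    have h2 := Fin.lt_iff_val_lt_val.mp this
    omega
  · intro t ht htk
    unfold ofSet
    rw [dif_pos ⟨ht, htk⟩]
    have := (s.orderEmbOfFin hs ⟨t - 1, by omega⟩).isLt
    omega
  · intro t ht
    unfold ofSet
    rw [dif_neg (by omega)]

lemma card_Q (n k : ℕ) :
    Nat.card {v : ℕ → ℕ // QTuple n k v} = (n - 1).choose (k + 1) := by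
  classical
  have key : Nat.card {v : ℕ → ℕ // QTuple n k v}
      = Nat.card {s : Finset (Fin (n - 1)) // s.card = k + 1} := by
    apply Nat.card_congr
    refine Equiv.mk
      (fun p => ⟨toSet n k p.1 p.2, toSet_card n k p.1 p.2⟩)
      (fun q => ⟨ofSet n k q.1 q.2, ofSet_Q n k q.1 q.2⟩) ?_ ?_
    · rintro ⟨v, hv⟩
      apply Subtype.ext
      funext t
      show ofSet n k (toSet n k v hv) (toSet_card n k v hv) t = v t
      unfold ofSet
      by_cases h : 1 ≤ t ∧ t ≤ k + 1
      · rw [dif_pos h, toSet_emb]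
        have h2 := hv.2.1 t h.1 h.2
        have : t - 1 + 1 = t := by omega
        rw [this]
        omega
      · rw [dif_neg h]
        exact (hv.2.2 t (by omega)).symm
    · rintro ⟨s, hs⟩
      apply Subtype.ext
      show toSet n k (ofSet n k s hs) (ofSet_Q n k s hs) = s
      ext x
      constructor
      · intro hx
        obtain ⟨t, ht1, ht2, hxv⟩ := ofSet_mem_toSet n k _ (ofSet_Q n k s hs) x hx
        have : ofSet n k s hs t = ((s.orderEmbOfFin hs ⟨t - 1, by omega⟩ : Fin (n - 1)) : ℕ) + 2 := by
          unfold ofSet; rw [dif_pos ⟨ht1, ht2⟩]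
        have hxval : (x : ℕ) = ((s.orderEmbOfFin hs ⟨t - 1, by omega⟩ : Fin (n - 1)) : ℕ) := by
          omega
        have : x = s.orderEmbOfFin hs ⟨t - 1, by omega⟩ := Fin.ext hxval
        rw [this]
        exact Finset.orderEmbOfFin_mem s hs _
      · intro hx
        have hrange := Finset.range_orderEmbOfFin s hs
        have : x ∈ Set.range (s.orderEmbOfFin hs) := by rw [hrange]; exact hx
        obtain ⟨i, hi⟩ := this
        unfold toSet
        apply Finset.mem_image.mpr
        refine ⟨i.val + 1, Finset.mem_Icc.mpr ⟨by omega, by omega⟩, ?_⟩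
        rw [dif_pos ⟨by omega, by omega⟩]
        apply Fin.ext
        show ofSet n k s hs (i.val + 1) - 2 = (x : ℕ)
        unfold ofSet
        rw [dif_pos ⟨by omega, by omega⟩]
        have hkey : ∀ (pf : i.val + 1 - 1 < k + 1),
            ((s.orderEmbOfFin hs ⟨i.val + 1 - 1, pf⟩ : Fin (n - 1)) : ℕ) = (x : ℕ) := by
          intro pf
          rw [show (⟨i.val + 1 - 1, pf⟩ : Fin (k + 1)) = i from Fin.ext (by simp), hi]
        rw [hkey]
        omega
  rw [key, Nat.card_eq_fintype_card, Fintype.card_finset_len, Fintype.card_fin]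
/-! ### The splicing maps -/

def F0 (k ℓ : ℕ) (w : ℕ → ℕ) : ℕ → ℕ := fun t =>
  if t = 0 then 0 else if t = 1 then ℓ + 1 else if t = 2 then w 1 + 1
  else if t ≤ k + 1 then w (t - 1) else 0

def F1 (k ℓ : ℕ) (w : ℕ → ℕ) : ℕ → ℕ := fun t =>
  if t = 0 then 0 else if t = 1 then w 1 else if t = 2 then ℓ
  else if t ≤ k + 1 then w (t - 1) else 0

def G0 (k : ℕ) (v : ℕ → ℕ) : ℕ → ℕ := fun t =>
  if t = 0 then 0 else if t = 1 then v 2 - 1 else if t ≤ k then v (t + 1) else 0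

def G1 (k : ℕ) (v : ℕ → ℕ) : ℕ → ℕ := fun t =>
  if t = 0 then 0 else if t = 1 then v 1 else if t ≤ k then v (t + 1) else 0

section evals
variable {k ℓ : ℕ} {w v : ℕ → ℕ}

lemma F0_1 : F0 k ℓ w 1 = ℓ + 1 := by norm_num [F0]
lemma F0_2 : F0 k ℓ w 2 = w 1 + 1 := by norm_num [F0]
lemma F0_3 {t : ℕ} (h3 : 3 ≤ t) (hle : t ≤ k + 1) : F0 k ℓ w t = w (t - 1) := by
  simp only [F0]
  rw [if_neg (by omega), if_neg (by omega), if_neg (by omega), if_pos hle]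
lemma F0_z {t : ℕ} (hk : 2 ≤ k) (h : t = 0 ∨ k + 1 < t) : F0 k ℓ w t = 0 := by
  simp only [F0]
  rcases h with rfl | h
  · rw [if_pos rfl]
  · rw [if_neg (by omega), if_neg (by omega), if_neg (by omega), if_neg (by omega)]

lemma F1_1 : F1 k ℓ w 1 = w 1 := by norm_num [F1]
lemma F1_2 : F1 k ℓ w 2 = ℓ := by norm_num [F1]
lemma F1_3 {t : ℕ} (h3 : 3 ≤ t) (hle : t ≤ k + 1) : F1 k ℓ w t = w (t - 1) := by
  simp only [F1]
  rw [if_neg (by omega), if_neg (by omega), if_neg (by omega), if_pos hle]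
lemma F1_z {t : ℕ} (hk : 2 ≤ k) (h : t = 0 ∨ k + 1 < t) : F1 k ℓ w t = 0 := by
  simp only [F1]
  rcases h with rfl | h
  · rw [if_pos rfl]
  · rw [if_neg (by omega), if_neg (by omega), if_neg (by omega), if_neg (by omega)]

lemma G0_1 : G0 k v 1 = v 2 - 1 := by norm_num [G0]
lemma G0_2 {t : ℕ} (h2 : 2 ≤ t) (hle : t ≤ k) : G0 k v t = v (t + 1) := by
  simp only [G0]
  rw [if_neg (by omega), if_neg (by omega), if_pos hle]
lemma G0_z {t : ℕ} (hk : 2 ≤ k) (h : t = 0 ∨ k < t) : G0 k v t = 0 := by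
  simp only [G0]
  rcases h with rfl | h
  · rw [if_pos rfl]
  · rw [if_neg (by omega), if_neg (by omega), if_neg (by omega)]

lemma G1_1 : G1 k v 1 = v 1 := by norm_num [G1]
lemma G1_2 {t : ℕ} (h2 : 2 ≤ t) (hle : t ≤ k) : G1 k v t = v (t + 1) := by
  simp only [G1]
  rw [if_neg (by omega), if_neg (by omega), if_pos hle]
lemma G1_z {t : ℕ} (hk : 2 ≤ k) (h : t = 0 ∨ k < t) : G1 k v t = 0 := by
  simp only [G1]
  rcases h with rfl | h
  · rw [if_pos rfl]
  · rw [if_neg (by omega), if_neg (by omega), if_neg (by omega)]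

end evals

section props
variable {n k ℓ : ℕ} {w v : ℕ → ℕ}

lemma F0_Q (hk : 2 ≤ k) (hl1 : 1 ≤ ℓ)
    (hw : IsKSubset n k w) (hc : NonToricCond n k ℓ w) (h : ℓ < w 1) :
    QTuple n k (F0 k ℓ w) := by
  obtain ⟨hm, hb, hz⟩ := hw
  obtain ⟨hc1, hc2, hc3, hc4⟩ := hc
  have h12 : w 1 < w 2 := hm 1 2 le_rfl (by omega) hk
  have h2l := hc4 2 le_rfl hk
  have hup : ∀ t, 2 ≤ t → t ≤ k → w 2 ≤ w t := by
    intro t h1 h2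
    rcases Nat.eq_or_lt_of_le h1 with e | l
    · rw [← e]
    · exact le_of_lt (hm 2 t (by omega) l h2)
  have h1up : ∀ t, 2 ≤ t → t ≤ k → w 1 < w t := fun t h1 h2 =>
    hm 1 t le_rfl (by omega) h2
  refine ⟨?_, ?_, ?_⟩
  · intro a b ha hab hbk
    rcases (show b = 2 ∨ 3 ≤ b by omega) with rfl | hb3
    · have ha1 : a = 1 := by omega
      subst ha1
      rw [F0_1, F0_2]
      omega
    · rw [F0_3 hb3 hbk]
      have hwb : w 2 ≤ w (b - 1) := hup (b - 1) (by omega) (by omega)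
      rcases (show a = 1 ∨ a = 2 ∨ 3 ≤ a by omega) with rfl | rfl | ha3
      · rw [F0_1]; omega
      · rw [F0_2]; omega
      · rw [F0_3 ha3 (by omega)]
        exact hm (a - 1) (b - 1) (by omega) (by omega) (by omega)
  · intro t h1 h2
    rcases (show t = 1 ∨ t = 2 ∨ 3 ≤ t by omega) with rfl | rfl | h3
    · rw [F0_1]; omega
    · rw [F0_2]; omega
    · rw [F0_3 h3 h2]
      have hb' := hb (t - 1) (by omega) (by omega)
      have hu' := h1up (t - 1) (by omega) (by omega)
      omega
  · intro t ht
    exact F0_z hk ht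

lemma F1_Q (hk : 2 ≤ k) (hln : ℓ ≤ n - 1)
    (hw : IsKSubset n k w) (hc : NonToricCond n k ℓ w) (h : ¬ ℓ < w 1) :
    QTuple n k (F1 k ℓ w) := by
  obtain ⟨hm, hb, hz⟩ := hw
  obtain ⟨hc1, hc2, hc3, hc4⟩ := hc
  have hlgt : w 1 < ℓ := by omega
  have h12 : w 1 < w 2 := hm 1 2 le_rfl (by omega) hk
  have h2l := hc4 2 le_rfl hk
  have hup : ∀ t, 2 ≤ t → t ≤ k → w 2 ≤ w t := by
    intro t h1 h2
    rcases Nat.eq_or_lt_of_le h1 with e | l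
    · rw [← e]
    · exact le_of_lt (hm 2 t (by omega) l h2)
  have h1up : ∀ t, 2 ≤ t → t ≤ k → w 1 < w t := fun t h1 h2 =>
    hm 1 t le_rfl (by omega) h2
  refine ⟨?_, ?_, ?_⟩
  · intro a b ha hab hbk
    rcases (show b = 2 ∨ 3 ≤ b by omega) with rfl | hb3
    · have ha1 : a = 1 := by omega
      subst ha1
      rw [F1_1, F1_2]
      omega
    · rw [F1_3 hb3 hbk]
      have hwb : w 2 ≤ w (b - 1) := hup (b - 1) (by omega) (by omega)
      rcases (show a = 1 ∨ a = 2 ∨ 3 ≤ a by omega) with rfl | rfl | ha3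
      · rw [F1_1]
        have := h1up (b - 1) (by omega) (by omega)
        omega
      · rw [F1_2]; omega
      · rw [F1_3 ha3 (by omega)]
        exact hm (a - 1) (b - 1) (by omega) (by omega) (by omega)
  · intro t h1 h2
    rcases (show t = 1 ∨ t = 2 ∨ 3 ≤ t by omega) with rfl | rfl | h3
    · rw [F1_1]; omega
    · rw [F1_2]; omega
    · rw [F1_3 h3 h2]
      have hb' := hb (t - 1) (by omega) (by omega)
      have hu' := h1up (t - 1) (by omega) (by omega)
      omega
  · intro t ht
    exact F1_z hk ht

lemma G0_prop (hk : 2 ≤ k) (hv : QTuple n k v) :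
    IsKSubset n k (G0 k v) ∧ NonToricCond n k (v 1 - 1) (G0 k v) := by
  obtain ⟨qm, qb, qz⟩ := hv
  have q12 : v 1 < v 2 := qm 1 2 le_rfl (by omega) (by omega)
  have qb1 := qb 1 le_rfl (by omega)
  have qb2 := qb 2 (by omega) (by omega)
  have hgap : v 2 + (k - 1) ≤ v (k + 1) := by
    have h := gap_of_mono qm (k - 1) 2 (by omega) (by omega)
    have e : 2 + (k - 1) = k + 1 := by omega
    rwa [e] at h
  have qbk1 := qb (k + 1) (by omega) (by omega)
  constructor
  · refine ⟨?_, ?_, ?_⟩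
    · intro a b ha hab hbk
      have hb2 : 2 ≤ b := by omega
      rw [G0_2 hb2 hbk]
      rcases (show a = 1 ∨ 2 ≤ a by omega) with rfl | ha2
      · rw [G0_1]
        have := qm 2 (b + 1) (by omega) (by omega) (by omega)
        omega
      · rw [G0_2 ha2 (by omega)]
        exact qm (a + 1) (b + 1) (by omega) (by omega) (by omega)
    · intro t h1 h2
      rcases (show t = 1 ∨ 2 ≤ t by omega) with rfl | h2t
      · rw [G0_1]; omega
      · rw [G0_2 h2t h2]
        have := qb (t + 1) (by omega) (by omega)
        omega
    · intro t ht
      exact G0_z hk ht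
  · refine ⟨?_, ?_, ?_, ?_⟩
    · rw [G0_1]; omega
    · rw [G0_1]; omega
    · rw [G0_1]; omega
    · intro t h2 hk'
      rw [G0_2 h2 hk', G0_1]
      have ha := qm 1 (t + 1) le_rfl (by omega) (by omega)
      have hb' := qm 2 (t + 1) (by omega) (by omega) (by omega)
      omega

lemma G0_mem (hk : 2 ≤ k) (hv : QTuple n k v) : 1 ≤ v 1 - 1 ∧ v 1 - 1 ≤ n - 1 := by
  obtain ⟨qm, qb, qz⟩ := hv
  have qb1 := qb 1 le_rfl (by omega)
  omega

lemma G1_prop (hk : 2 ≤ k) (hv : QTuple n k v) :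
    IsKSubset n k (G1 k v) ∧ NonToricCond n k (v 2) (G1 k v) := by
  obtain ⟨qm, qb, qz⟩ := hv
  have q12 : v 1 < v 2 := qm 1 2 le_rfl (by omega) (by omega)
  have qb1 := qb 1 le_rfl (by omega)
  have qb2 := qb 2 (by omega) (by omega)
  have hgap : v 1 + k ≤ v (k + 1) := by
    have h := gap_of_mono qm k 1 le_rfl (by omega)
    have e : 1 + k = k + 1 := by omega
    rwa [e] at h
  have qbk1 := qb (k + 1) (by omega) (by omega)
  constructor
  · refine ⟨?_, ?_, ?_⟩
    · intro a b ha hab hbk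
      have hb2 : 2 ≤ b := by omega
      rw [G1_2 hb2 hbk]
      rcases (show a = 1 ∨ 2 ≤ a by omega) with rfl | ha2
      · rw [G1_1]
        exact qm 1 (b + 1) le_rfl (by omega) (by omega)
      · rw [G1_2 ha2 (by omega)]
        exact qm (a + 1) (b + 1) (by omega) (by omega) (by omega)
    · intro t h1 h2
      rcases (show t = 1 ∨ 2 ≤ t by omega) with rfl | h2t
      · rw [G1_1]; omega
      · rw [G1_2 h2t h2]
        have := qb (t + 1) (by omega) (by omega)
        omega
    · intro t ht
      exact G1_z hk ht
  · refine ⟨?_, ?_, ?_, ?_⟩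
    · rw [G1_1]; omega
    · rw [G1_1]; omega
    · rw [G1_1]; omega
    · intro t h2 hk'
      rw [G1_2 h2 hk', G1_1]
      have hb' := qm 2 (t + 1) (by omega) (by omega) (by omega)
      omega

lemma G1_mem (hk : 2 ≤ k) (hv : QTuple n k v) : 1 ≤ v 2 ∧ v 2 ≤ n - 1 := by
  obtain ⟨qm, qb, qz⟩ := hv
  have qb2 := qb 2 (by omega) (by omega)
  have hgap : v 2 + (k - 1) ≤ v (k + 1) := by
    have h := gap_of_mono qm (k - 1) 2 (by omega) (by omega)
    have e : 2 + (k - 1) = k + 1 := by omega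
    rwa [e] at h
  have qbk1 := qb (k + 1) (by omega) (by omega)
  omega

/-! ### Round trips -/

lemma L1 (hk : 2 ≤ k) (hw : IsKSubset n k w) : G0 k (F0 k ℓ w) = w := by
  obtain ⟨hm, hb, hz⟩ := hw
  funext t
  rcases (show t = 0 ∨ t = 1 ∨ (2 ≤ t ∧ t ≤ k) ∨ k < t by omega) with rfl | rfl | ⟨h2, hle⟩ | hgt
  · rw [G0_z hk (Or.inl rfl), hz 0 (Or.inl rfl)]
  · rw [G0_1, F0_2]; omega
  · rw [G0_2 h2 hle, F0_3 (by omega) (by omega)]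
    congr 1
  · rw [G0_z hk (Or.inr hgt), hz t (Or.inr hgt)]

lemma L2 (hk : 2 ≤ k) (hw : IsKSubset n k w) : G1 k (F1 k ℓ w) = w := by
  obtain ⟨hm, hb, hz⟩ := hw
  funext t
  rcases (show t = 0 ∨ t = 1 ∨ (2 ≤ t ∧ t ≤ k) ∨ k < t by omega) with rfl | rfl | ⟨h2, hle⟩ | hgt
  · rw [G1_z hk (Or.inl rfl), hz 0 (Or.inl rfl)]
  · rw [G1_1, F1_1]
  · rw [G1_2 h2 hle, F1_3 (by omega) (by omega)]
    congr 1
  · rw [G1_z hk (Or.inr hgt), hz t (Or.inr hgt)]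

lemma R1 (hk : 2 ≤ k) (hv : QTuple n k v) : F0 k (v 1 - 1) (G0 k v) = v := by
  obtain ⟨qm, qb, qz⟩ := hv
  have qb1 := qb 1 le_rfl (by omega)
  have qb2 := qb 2 (by omega) (by omega)
  funext t
  rcases (show t = 0 ∨ t = 1 ∨ t = 2 ∨ (3 ≤ t ∧ t ≤ k + 1) ∨ k + 1 < t by omega) with
    rfl | rfl | rfl | ⟨h3, hle⟩ | hgt
  · rw [F0_z hk (Or.inl rfl)]
    exact (qz 0 (Or.inl rfl)).symm
  · rw [F0_1]; omega
  · rw [F0_2, G0_1]; omega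
  · rw [F0_3 h3 hle, G0_2 (by omega) (by omega)]
    congr 1
    omega
  · rw [F0_z hk (Or.inr hgt)]
    exact (qz t (Or.inr hgt)).symm

lemma R2 (hk : 2 ≤ k) (hv : QTuple n k v) : F1 k (v 2) (G1 k v) = v := by
  obtain ⟨qm, qb, qz⟩ := hv
  funext t
  rcases (show t = 0 ∨ t = 1 ∨ t = 2 ∨ (3 ≤ t ∧ t ≤ k + 1) ∨ k + 1 < t by omega) with
    rfl | rfl | rfl | ⟨h3, hle⟩ | hgt
  · rw [F1_z hk (Or.inl rfl)]
    exact (qz 0 (Or.inl rfl)).symm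
  · rw [F1_1, G1_1]
  · rw [F1_2]
  · rw [F1_3 h3 hle, G1_2 (by omega) (by omega)]
    congr 1
    omega
  · rw [F1_z hk (Or.inr hgt)]
    exact (qz t (Or.inr hgt)).symm

end props

lemma sigEq {n k : ℕ} {S : Finset ℕ}
    {a b : Σ ℓ : {x : ℕ // x ∈ S}, {w : ℕ → ℕ // IsKSubset n k w ∧ NonToricCond n k ℓ.val w}}
    (h1 : (a.1 : ℕ) = (b.1 : ℕ)) (h2 : (a.2 : ℕ → ℕ) = (b.2 : ℕ → ℕ)) : a = b := by
  obtain ⟨⟨x, hx⟩, ⟨u, hu⟩⟩ := a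
  obtain ⟨⟨y, hy⟩, ⟨u', hu'⟩⟩ := b
  dsimp at h1 h2
  subst h1
  subst h2
  rfl

lemma main_card (n k : ℕ) (hk : 2 ≤ k) :
    Nat.card (Σ ℓ : {x : ℕ // x ∈ Finset.Icc 1 (n - 1)},
      {w : ℕ → ℕ // IsKSubset n k w ∧ NonToricCond n k ℓ.val w})
    = Nat.card ({v : ℕ → ℕ // QTuple n k v} × Bool) := by
  apply Nat.card_congr
  refine Equiv.mk
    (fun p =>
      if h : (p.1 : ℕ) < (p.2 : ℕ → ℕ) 1 then
        (⟨F0 k p.1 p.2, F0_Q hk (Finset.mem_Icc.mp p.1.2).1 p.2.2.1 p.2.2.2 h⟩, false)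
      else
        (⟨F1 k p.1 p.2, F1_Q hk (Finset.mem_Icc.mp p.1.2).2 p.2.2.1 p.2.2.2 h⟩, true))
    (fun q =>
      if hb : q.2 = true then
        ⟨⟨(q.1 : ℕ → ℕ) 2, Finset.mem_Icc.mpr (G1_mem hk q.1.2)⟩,
          ⟨G1 k q.1, G1_prop hk q.1.2⟩⟩
      else
        ⟨⟨(q.1 : ℕ → ℕ) 1 - 1, Finset.mem_Icc.mpr (G0_mem hk q.1.2)⟩,
          ⟨G0 k q.1, G0_prop hk q.1.2⟩⟩)
    ?_ ?_
  · rintro ⟨⟨ℓ, hℓ⟩, ⟨w, hw⟩⟩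
    dsimp only
    by_cases h : ℓ < w 1
    · rw [dif_pos h]
      dsimp only
      rw [dif_neg Bool.false_ne_true]
      refine sigEq ?_ ?_
      · show F0 k ℓ w 1 - 1 = ℓ
        rw [F0_1]
        omega
      · show G0 k (F0 k ℓ w) = w
        exact L1 hk hw.1
    · rw [dif_neg h]
      dsimp only
      rw [dif_pos rfl]
      refine sigEq ?_ ?_
      · show F1 k ℓ w 2 = ℓ
        rw [F1_2]
      · show G1 k (F1 k ℓ w) = w
        exact L2 hk hw.1
  · rintro ⟨⟨v, hv⟩, b⟩
    cases b
    · dsimp only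
      rw [dif_neg Bool.false_ne_true]
      dsimp only
      have hcond : v 1 - 1 < G0 k v 1 := by
        rw [G0_1]
        have q12 := hv.1 1 2 le_rfl (by omega) (by omega)
        have qb1 := hv.2.1 1 le_rfl (by omega)
        omega
      rw [dif_pos hcond]
      exact Prod.ext (Subtype.ext (R1 hk hv)) rfl
    · dsimp only
      rw [dif_pos rfl]
      dsimp only
      have hcond : ¬ (v 2 < G1 k v 1) := by
        rw [G1_1]
        have q12 := hv.1 1 2 le_rfl (by omega) (by omega)
        omega
      rw [dif_neg hcond]
      exact Prod.ext (Subtype.ext (R2 hk hv)) rfl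

/-- summed over ℓ ∈ {1,...,n-1}, the number of strictly
increasing k-tuples w in [n] with w₁ ∈ {2,...,n-k} \ {ℓ} and
{w₂,...,w_k} ⊆ {ℓ+1,...,n} \ {w₁+1} equals 2·C(n-1, k+1). -/
theorem stmt11 (n k : ℕ) (hk : 2 ≤ k) :
    ∑ ℓ ∈ Finset.Icc 1 (n - 1),
      Nat.card {w : ℕ → ℕ // IsKSubset n k w ∧ NonToricCond n k ℓ w} =
    2 * Nat.choose (n - 1) (k + 1) := by
  classical
  letI : ∀ ℓ : ℕ, Fintype {w : ℕ → ℕ // IsKSubset n k w ∧ NonToricCond n k ℓ w} :=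
    fun ℓ => @Fintype.ofFinite _ (finite_A n k ℓ)
  rw [← Finset.sum_coe_sort (Finset.Icc 1 (n - 1))
      (fun ℓ => Nat.card {w : ℕ → ℕ // IsKSubset n k w ∧ NonToricCond n k ℓ w})]
  have h1 : ∑ ℓ : {x : ℕ // x ∈ Finset.Icc 1 (n - 1)},
      Nat.card {w : ℕ → ℕ // IsKSubset n k w ∧ NonToricCond n k (ℓ : ℕ) w}
      = Nat.card (Σ ℓ : {x : ℕ // x ∈ Finset.Icc 1 (n - 1)},
        {w : ℕ → ℕ // IsKSubset n k w ∧ NonToricCond n k (ℓ : ℕ) w}) := by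
    rw [Nat.card_eq_fintype_card, Fintype.card_sigma]
    simp [Nat.card_eq_fintype_card]
  rw [h1, main_card n k hk, Nat.card_prod, card_Q]
  have : Nat.card Bool = 2 := by simp [Nat.card_eq_fintype_card]
  rw [this]
  ring
end

section
/- Let I = {i_1 < ... < i_k} and J = {j_1 < ... < j_k} be k-subsets of [n] with i_1 ∈ B_1 = {1,...,ℓ}, i_2,...,i_k, j_1,...,j_k ∈ B_2 = {ℓ+1,...,n}, and i_2 > j_1 and j_2 ≤ i_2. Define r = min{t ≥ 2 : j_{t+1} > i_t} (with j_{k+1} = +∞ so r is well-defined and r ≤ k). Then the sets I' = {i_1, i_2, ..., i_r, min(i_{r+1}, j_{r+1}), ..., min(i_k, j_k)} and J' = {j_1, j_2, ..., j_r, max(i_{r+1}, j_{r+1}), ..., max(i_k, j_k)} are strictly increasing k-tuples, and the multiset I' ∪ J' equals the multiset I ∪ J. -/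
/-- (the Case 3b construction).  Let I = (a 1 < ... < a k) and
J = (b 1 < ... < b k) be k-subsets of [n] with a 1 ∈ B₁ = {1,...,ℓ},
a 2,...,a k, b 1,...,b k ∈ B₂ = {ℓ+1,...,n}, b 1 < a 2 and b 2 ≤ a 2.
Let r = min{t ≥ 2 : b (t+1) > a t} (with b (k+1) = +∞, so r ≤ k).  Then the
tuples I' = (a 1,...,a r, min(a t, b t) for t > r) and
J' = (b 1,...,b r, max(a t, b t) for t > r) are strictly increasing, and
their multiset union equals the multiset union of I and J. -/
theorem stmt12 (n k ℓ r : ℕ) (hk : 2 ≤ k) (hℓ1 : 1 ≤ ℓ) (hℓn : ℓ ≤ n)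
    (a b : ℕ → ℕ)
    (ha : IncSeq k a) (ha' : InRange n k a)
    (hb : IncSeq k b) (hb' : InRange n k b)
    (ha1 : a 1 ≤ ℓ)
    (ha2 : ∀ t, 2 ≤ t → t ≤ k → ℓ < a t)
    (hb1 : ∀ t, 1 ≤ t → t ≤ k → ℓ < b t)
    (hba : b 1 < a 2) (hba2 : b 2 ≤ a 2)
    (hr1 : 2 ≤ r) (hr2 : r ≤ k)
    (hrdef : r = k ∨ a r < b (r + 1))
    (hrmin : ∀ t, 2 ≤ t → t < r → b (t + 1) ≤ a t) :
    IncSeq k (fun t => if t ≤ r then a t else min (a t) (b t)) ∧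
    IncSeq k (fun t => if t ≤ r then b t else max (a t) (b t)) ∧
    (Finset.Icc 1 k).val.map (fun t => if t ≤ r then a t else min (a t) (b t)) +
      (Finset.Icc 1 k).val.map (fun t => if t ≤ r then b t else max (a t) (b t)) =
    (Finset.Icc 1 k).val.map a + (Finset.Icc 1 k).val.map b := by

  have hrk : ∀ t, r < t → t ≤ k → a r < b t := by
    intro t ht htk
    rcases hrdef with h | h
    · omega
    · rcases eq_or_lt_of_le (Nat.succ_le_of_lt ht) with he | hl
      · rw [← he]; exact h
      · exact h.trans (hb _ _ (by omega) hl htk)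
  refine ⟨?_, ?_, ?_⟩
  · intro s t hs hst htk
    by_cases hsr : s ≤ r <;> by_cases htr : t ≤ r <;> simp only [hsr, htr, if_true, if_false]
    · exact ha s t hs hst htk
    · refine lt_min (ha s t hs hst htk) ?_
      rcases eq_or_lt_of_le hsr with he | hl
      · rw [he]; exact hrk t (by omega) htk
      · exact (ha s r hs hl hr2).trans (hrk t (by omega) htk)
    · omega
    · exact lt_min ((min_le_left _ _).trans_lt (ha s t hs hst htk))
        ((min_le_right _ _).trans_lt (hb s t hs hst htk))
  · intro s t hs hst htk
    by_cases hsr : s ≤ r <;> by_cases htr : t ≤ r <;> simp only [hsr, htr, if_true, if_false]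
    · exact hb s t hs hst htk
    · exact (hb s t hs hst htk).trans_le (le_max_right _ _)
    · omega
    · exact max_lt ((ha s t hs hst htk).trans_le (le_max_left _ _))
        ((hb s t hs hst htk).trans_le (le_max_right _ _))
  · have h1 : ∀ (s : Multiset ℕ) (f g : ℕ → ℕ),
        s.map f + s.map g = s.bind (fun t => {f t, g t}) := by
      intro s f g
      rw [← Multiset.bind_singleton s f, ← Multiset.bind_singleton s g, ← Multiset.bind_add]
      simp [Multiset.singleton_add]
    rw [h1, h1]
    refine Multiset.bind_congr ?_
    intro t ht
    by_cases htr : t ≤ r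
    · simp [htr]
    · simp only [htr, if_false]
      rcases le_total (a t) (b t) with h | h
      · rw [min_eq_left h, max_eq_right h]
      · rw [min_eq_right h, max_eq_left h, Multiset.pair_comm]
end

section
/- Let R = K[x_1,...,x_m] be a polynomial ring over a field K, let f_1, ..., f_s be homogeneous quadratic polynomials forming a minimal generating set of the ideal I they generate, and let w ∈ Z_{≥0}^m be a weight vector. Then there exist homogeneous quadratic polynomials g_1, ..., g_s ∈ I such that the initial forms in_w(g_1), ..., in_w(g_s) form a minimal generating set of the ideal they generate. -/
open MvPolynomial

/-- The w-weight of an exponent vector d: Σ d_i · w_i. -/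
def mwt {m : ℕ} (w : Fin m → ℕ) (d : Fin m →₀ ℕ) : ℕ := ∑ i, d i * w i

/-- The initial form of f with respect to the weight vector w: the sum of the
terms of f of lowest w-weight. -/
noncomputable def initForm {K : Type*} [Field K] {m : ℕ} (w : Fin m → ℕ)
    (f : MvPolynomial (Fin m) K) : MvPolynomial (Fin m) K :=
  ∑ d ∈ f.support.filter
      (fun d => (mwt w d : WithTop ℕ) =
        f.support.inf (fun e => (mwt w e : WithTop ℕ))),
    monomial d (coeff d f)

section Aux

variable {K : Type*} [Field K] {m : ℕ} (w : Fin m → ℕ)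

lemma coeff_initForm (f : MvPolynomial (Fin m) K) (d : Fin m →₀ ℕ) :
    coeff d (initForm w f) =
      if (mwt w d : WithTop ℕ) = f.support.inf (fun e => (mwt w e : WithTop ℕ)) then
        coeff d f else 0 := by
  classical
  rw [initForm, MvPolynomial.coeff_sum]
  simp_rw [coeff_monomial]
  rw [Finset.sum_ite_eq' _ d (fun e => coeff e f)]
  split_ifs with h1 h2 h2 <;> try rfl
  · simp only [Finset.mem_filter] at h1
    exact absurd h1.2 h2
  · simp only [Finset.mem_filter, not_and] at h1
    by_contra hc
    exact h1 (MvPolynomial.mem_support_iff.mpr (fun h => hc (by rw [h]))) h2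

lemma coeff_initForm_eq_zero {f : MvPolynomial (Fin m) K} {d : Fin m →₀ ℕ}
    (h : coeff d f = 0) : coeff d (initForm w f) = 0 := by
  rw [coeff_initForm]; split_ifs <;> simp [h]

lemma exists_coeff_initForm_ne_zero {f : MvPolynomial (Fin m) K} (hf : f ≠ 0) :
    ∃ d, coeff d (initForm w f) ≠ 0 := by
  obtain ⟨d, hd, hinf⟩ := Finset.exists_mem_eq_inf f.support
    (MvPolynomial.support_nonempty.mpr hf) (fun e => (mwt w e : WithTop ℕ))
  refine ⟨d, ?_⟩
  rw [coeff_initForm, if_pos hinf.symm]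
  exact MvPolynomial.mem_support_iff.mp hd

lemma initForm_isHomogeneous {f : MvPolynomial (Fin m) K} {n : ℕ}
    (hf : f.IsHomogeneous n) : (initForm w f).IsHomogeneous n := by
  intro d hd
  apply hf
  rw [coeff_initForm] at hd
  split_ifs at hd
  · exact hd
  · exact absurd rfl hd

/-- Core lemma: from a linearly independent family one can produce a family in its span
whose initial forms are linearly independent. -/
lemma core : ∀ (s : ℕ) (v : Fin s → MvPolynomial (Fin m) K), LinearIndependent K v →
    ∃ g : Fin s → MvPolynomial (Fin m) K,
      (∀ i, g i ∈ Submodule.span K (Set.range v)) ∧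
      LinearIndependent K (fun i => initForm w (g i)) := by
  intro s
  induction s with
  | zero =>
      intro v _
      exact ⟨v, fun i => i.elim0, linearIndependent_empty_type⟩
  | succ s IH =>
      intro v hv
      have hv0 : v 0 ≠ 0 := hv.ne_zero 0
      obtain ⟨d₀, hd₀⟩ := exists_coeff_initForm_ne_zero w hv0
      have hd₀' : coeff d₀ (v 0) ≠ 0 := by
        intro h
        exact hd₀ (coeff_initForm_eq_zero w h)
      set c : Fin s → K := fun i => coeff d₀ (v i.succ) / coeff d₀ (v 0) with hc
      set u : Fin s → MvPolynomial (Fin m) K := fun i => v i.succ - c i • v 0 with hu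
      have hu_ker : ∀ i, coeff d₀ (u i) = 0 := by
        intro i
        simp only [hu, coeff_sub, MvPolynomial.coeff_smul, hc, smul_eq_mul]
        field_simp
        ring
      have hu_li : LinearIndependent K u := by
        rw [Fintype.linearIndependent_iff]
        intro T hT i
        have key : ∑ j, (Fin.cons (-(∑ k, T k * c k)) T : Fin (s+1) → K) j • v j = 0 := by
          rw [Fin.sum_univ_succ]
          simp only [Fin.cons_zero, Fin.cons_succ, neg_smul]
          have hT' : ∑ j, T j • u j = 0 := hT
          simp only [hu, smul_sub, Finset.sum_sub_distrib, smul_smul] at hT'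
          rw [← Finset.sum_smul] at hT'
          rw [neg_add_eq_sub]
          exact hT'
        have := Fintype.linearIndependent_iff.mp hv _ key i.succ
        simpa using this
      obtain ⟨g', hg'mem, hg'li⟩ := IH u hu_li
      have huspan : Submodule.span K (Set.range u) ≤ Submodule.span K (Set.range v) := by
        rw [Submodule.span_le]
        rintro _ ⟨i, rfl⟩
        exact sub_mem (Submodule.subset_span ⟨i.succ, rfl⟩)
          (Submodule.smul_mem _ _ (Submodule.subset_span ⟨0, rfl⟩))
      have hg'ker : ∀ i, coeff d₀ (g' i) = 0 := by
        intro i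
        have hker : Submodule.span K (Set.range u) ≤
            LinearMap.ker (MvPolynomial.lcoeff K d₀) := by
          rw [Submodule.span_le]
          rintro _ ⟨j, rfl⟩
          simpa [MvPolynomial.lcoeff_apply] using hu_ker j
        simpa [MvPolynomial.lcoeff_apply] using hker (hg'mem i)
      refine ⟨Fin.cons (v 0) g', ?_, ?_⟩
      · intro i
        refine Fin.cases ?_ ?_ i
        · exact Submodule.subset_span ⟨0, rfl⟩
        · intro j
          simpa using huspan (hg'mem j)
      · have heq : (fun i => initForm w ((Fin.cons (v 0) g' :
              Fin (s+1) → MvPolynomial (Fin m) K) i)) =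
            Fin.cons (initForm w (v 0)) (fun i => initForm w (g' i)) := by
          funext i
          refine Fin.cases ?_ ?_ i
          · simp
          · intro j; simp
        rw [heq, linearIndependent_fin_cons]
        refine ⟨hg'li, ?_⟩
        intro hmem
        have hker2 : Submodule.span K (Set.range (fun i => initForm w (g' i))) ≤
            LinearMap.ker (MvPolynomial.lcoeff K d₀) := by
          rw [Submodule.span_le]
          rintro _ ⟨j, rfl⟩
          simpa [MvPolynomial.lcoeff_apply] using coeff_initForm_eq_zero w (hg'ker j)
        exact hd₀ (by simpa [MvPolynomial.lcoeff_apply] using hker2 hmem)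

lemma span_K_le_ideal (S : Set (MvPolynomial (Fin m) K)) :
    Submodule.span K S ≤ (Ideal.span S).restrictScalars K :=
  Submodule.span_le.mpr Ideal.subset_span

lemma homog2_mul_component (h p : MvPolynomial (Fin m) K) (hp : p.IsHomogeneous 2) :
    homogeneousComponent 2 (h * p) = coeff 0 h • p := by
  classical
  conv_lhs => rw [← sum_homogeneousComponent h, Finset.sum_mul, map_sum]
  rw [Finset.sum_eq_single 0]
  · rw [homogeneousComponent_zero, ← smul_eq_C_mul, map_smul,
      homogeneousComponent_of_mem ((mem_homogeneousSubmodule 2 p).mpr hp),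
      if_pos rfl]
  · intro b _ hb
    have hb2 : ((homogeneousComponent b h) * p).IsHomogeneous (b + 2) :=
      (homogeneousComponent_isHomogeneous b h).mul hp
    rw [homogeneousComponent_of_mem
      ((mem_homogeneousSubmodule (b + 2) _).mpr hb2), if_neg (by omega)]
  · intro habs
    exact absurd (Finset.mem_range.mpr (Nat.succ_pos _)) habs

lemma homog2_ideal_mem_span {S : Set (MvPolynomial (Fin m) K)}
    (hS : ∀ p ∈ S, p.IsHomogeneous 2) {q : MvPolynomial (Fin m) K}
    (hq : q.IsHomogeneous 2) (h : q ∈ Ideal.span S) : q ∈ Submodule.span K S := by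
  classical
  obtain ⟨co, hco_supp, hco_sum⟩ := Submodule.mem_span_set.mp h
  have hq2 : homogeneousComponent 2 q = q := by
    rw [homogeneousComponent_of_mem ((mem_homogeneousSubmodule 2 q).mpr hq),
      if_pos rfl]
  rw [← hq2, ← hco_sum, Finsupp.sum, map_sum]
  refine Submodule.sum_mem _ ?_
  intro p hp
  have hpS : p ∈ S := hco_supp hp
  rw [smul_eq_mul, homog2_mul_component _ p (hS p hpS)]
  exact Submodule.smul_mem _ _ (Submodule.subset_span hpS)

lemma set_ne_eq (s : ℕ) (i : Fin s) : {j : Fin s | j ≠ i} = Set.univ \ {i} := by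
  ext j; simp

end Aux

/-- if f₁, ..., f_s are homogeneous quadratic polynomials forming
a minimal generating set of the ideal I they generate, and w is a weight
vector, then there are homogeneous quadratic polynomials g₁, ..., g_s ∈ I whose
initial forms in_w(g₁), ..., in_w(g_s) form a minimal generating set of the
ideal they generate. -/
theorem stmt17 (K : Type*) [Field K] (m s : ℕ)
    (f : Fin s → MvPolynomial (Fin m) K)
    (hhom : ∀ i, (f i).IsHomogeneous 2)
    (hmin : ∀ i, f i ∉ Ideal.span (f '' {j | j ≠ i}))
    (w : Fin m → ℕ) :
    ∃ g : Fin s → MvPolynomial (Fin m) K,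
      (∀ i, g i ∈ Ideal.span (Set.range f)) ∧
      (∀ i, (g i).IsHomogeneous 2) ∧
      (∀ i, initForm w (g i) ∉
        Ideal.span ((fun j => initForm w (g j)) '' {j | j ≠ i})) := by
  have hfli : LinearIndependent K f := by
    rw [linearIndependent_iff_notMem_span]
    intro i hi
    refine hmin i ?_
    rw [set_ne_eq]
    exact span_K_le_ideal _ hi
  obtain ⟨g, hgmem, hgli⟩ := core w s f hfli
  have hghom : ∀ i, (g i).IsHomogeneous 2 := by
    intro i
    have : Submodule.span K (Set.range f) ≤ homogeneousSubmodule (Fin m) K 2 := by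
      rw [Submodule.span_le]
      rintro _ ⟨j, rfl⟩
      exact hhom j
    exact this (hgmem i)
  refine ⟨g, fun i => span_K_le_ideal _ (hgmem i), hghom, ?_⟩
  intro i hi
  have hS : ∀ p ∈ (fun j => initForm w (g j)) '' {j | j ≠ i}, p.IsHomogeneous 2 := by
    rintro _ ⟨j, _, rfl⟩
    exact initForm_isHomogeneous w (hghom j)
  have := homog2_ideal_mem_span hS (initForm_isHomogeneous w (hghom i)) hi
  rw [set_ne_eq] at this
  exact linearIndependent_iff_notMem_span.mp hgli i this
end
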